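/- arXiv:1207.7290 — 5 statements merged into one kernel-verified Lean document; each statement's English description precedes it below -/
import Mathlib

section
/- A map Ψ : C(S^{n-1}) → C(S^{n-1}) is a monotone (nonnegative functions map to nonnegative functions), linear map that intertwines rotations (Ψ(f ∘ ϑ^{-1}) = (Ψf) ∘ ϑ^{-1} for all ϑ ∈ SO(n)) if and only if there exists a nonnegative zonal finite Borel measure μ on S^{n-1} such that Ψf = f ∗ μ for all f, where (f ∗ μ)(η e) = ∫_{S^{n-1}} f(ηu) dμ(u) for η ∈ SO(n). -/
/-!
Evaluation at the pole, `f ↦ (Ψ f) e`, is a positive linear functional on `C(S^{n-1})`, so by the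
Riesz–Markov–Kakutani theorem it is integration against a finite measure `μ`. Intertwining then
gives `(Ψ f)(η e) = (Ψ (f ∘ η)) e = ∫ f(η u) dμ(u)`, and for `ϑ` fixing `e` this says that `μ` and
its image under `ϑ` integrate continuous functions alike, hence coincide. Conversely, transitivity
writes every point as `η e`, where the convolution formula is visibly monotone and equivariant.
-/

open MeasureTheory Metric

noncomputable section

abbrev Euc (n : ℕ) := EuclideanSpace ℝ (Fin n)

/-- The unit sphere S^{n-1} ⊂ ℝⁿ. -/
abbrev Sph (n : ℕ) := Metric.sphere (0 : Euc n) 1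

open scoped CompactlySupported

theorem exists_isFiniteMeasure_eq_integral_of_nonneg {X : Type*} [TopologicalSpace X]
    [CompactSpace X] [T2Space X] [MeasurableSpace X] [BorelSpace X]
    (Λ : C(X, ℝ) →ₗ[ℝ] ℝ) (hΛ : ∀ f : C(X, ℝ), (∀ x, 0 ≤ f x) → 0 ≤ Λ f) :
    ∃ μ : Measure X, IsFiniteMeasure μ ∧ ∀ f : C(X, ℝ), Λ f = ∫ x, f x ∂μ := by
  let toCc := CompactlySupportedContinuousMap.continuousMapEquiv (α := X) (β := ℝ)
  let Λc : C_c(X, ℝ) →ₗ[ℝ] ℝ :=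
    { toFun := fun f => Λ (toCc.symm f)
      map_add' := fun f g => map_add Λ (toCc.symm f) (toCc.symm g)
      map_smul' := fun c f => map_smul Λ c (toCc.symm f) }
  let Λp := PositiveLinearMap.mk₀ Λc fun f hf => hΛ (toCc.symm f) hf
  exact ⟨RealRMK.rieszMeasure Λp, inferInstance,
    fun f => (RealRMK.integral_rieszMeasure Λp (toCc f)).symm⟩

theorem MeasureTheory.Measure.map_eq_self_of_integral_comp_eq {X : Type*} [TopologicalSpace X]
    [HasOuterApproxClosed X] [MeasurableSpace X] [BorelSpace X]
    {μ : Measure X} [IsFiniteMeasure μ] {φ : X → X} (hφ : Continuous φ)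
    (h : ∀ f : C(X, ℝ), ∫ x, f (φ x) ∂μ = ∫ x, f x ∂μ) : μ.map φ = μ := by
  refine ext_of_forall_integral_eq_of_IsFiniteMeasure fun f => ?_
  rw [integral_map hφ.aemeasurable f.continuous.aestronglyMeasurable]
  exact h f.toContinuousMap

section Convolution

variable {X G : Type*} [TopologicalSpace X] [MeasurableSpace X]
  {act : G → X → X} {e : X} {Ψ : C(X, ℝ) →ₗ[ℝ] C(X, ℝ)} {μ : Measure X}

theorem apply_act_eq_integral_of_intertwining [Group G] (hcont : ∀ η, Continuous (act η))
    (hΨ : ∀ (ϑ : G) (f g : C(X, ℝ)), (∀ u, g u = f (act ϑ⁻¹ u)) → ∀ u, Ψ g u = Ψ f (act ϑ⁻¹ u))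
    (hμ : ∀ f : C(X, ℝ), Ψ f e = ∫ x, f x ∂μ) (f : C(X, ℝ)) (η : G) :
    Ψ f (act η e) = ∫ u, f (act η u) ∂μ := by
  have h := hΨ η⁻¹ f (f.comp ⟨act η, hcont η⟩) (fun u => by simp) e
  rw [inv_inv] at h
  rw [← h, hμ]
  rfl

theorem map_act_eq_self_of_convolution [HasOuterApproxClosed X] [BorelSpace X]
    [IsFiniteMeasure μ] (hcont : ∀ η, Continuous (act η))
    (hμ : ∀ f : C(X, ℝ), Ψ f e = ∫ x, f x ∂μ)
    (hconv : ∀ (f : C(X, ℝ)) (η : G), Ψ f (act η e) = ∫ u, f (act η u) ∂μ)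
    {ϑ : G} (hϑ : act ϑ e = e) : μ.map (act ϑ) = μ :=
  μ.map_eq_self_of_integral_comp_eq (hcont ϑ) fun f => by rw [← hconv f ϑ, hϑ, hμ]

theorem apply_nonneg_of_convolution (htrans : ∀ u, ∃ η : G, act η e = u)
    (hconv : ∀ (f : C(X, ℝ)) (η : G), Ψ f (act η e) = ∫ u, f (act η u) ∂μ)
    (f : C(X, ℝ)) (hf : ∀ u, 0 ≤ f u) (u : X) : 0 ≤ Ψ f u := by
  obtain ⟨η, rfl⟩ := htrans u
  rw [hconv]
  exact integral_nonneg fun v => hf _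

theorem intertwining_of_convolution [Group G]
    (hact_mul : ∀ η τ u, act (η * τ) u = act η (act τ u))
    (htrans : ∀ u, ∃ η : G, act η e = u)
    (hconv : ∀ (f : C(X, ℝ)) (η : G), Ψ f (act η e) = ∫ u, f (act η u) ∂μ)
    (ϑ : G) (f g : C(X, ℝ)) (hg : ∀ u, g u = f (act ϑ⁻¹ u)) (u : X) :
    Ψ g u = Ψ f (act ϑ⁻¹ u) := by
  obtain ⟨η, rfl⟩ := htrans u
  rw [hconv, ← hact_mul, hconv]
  simp_rw [hg, hact_mul]

end Convolution

/-- The rotation group SO(n) is taken as an abstract topological group `G` acting transitively on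
the sphere with pole `e`; "zonal" means invariant under the stabilizer of `e`. -/
theorem stmt2_general (n : ℕ)
    (G : Type*) [Group G] [TopologicalSpace G]
    (act : G → Sph n → Sph n)
    (hact_mul : ∀ η τ u, act (η * τ) u = act η (act τ u))
    (hact_cont : Continuous fun p : G × Sph n => act p.1 p.2)
    (e : Sph n)
    (htrans : ∀ u : Sph n, ∃ η : G, act η e = u)
    (Ψ : C(Sph n, ℝ) →ₗ[ℝ] C(Sph n, ℝ)) :
    -- Ψ is monotone and intertwines rotations …
    ((∀ f : C(Sph n, ℝ), (∀ u, 0 ≤ f u) → ∀ u, 0 ≤ Ψ f u) ∧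
      (∀ (ϑ : G) (f g : C(Sph n, ℝ)), (∀ u, g u = f (act ϑ⁻¹ u)) →
        ∀ u, Ψ g u = Ψ f (act ϑ⁻¹ u)))
    ↔ -- … iff Ψ is convolution with a nonnegative zonal finite measure μ
    (∃ μ : Measure (Sph n), IsFiniteMeasure μ ∧
      (∀ ϑ : G, act ϑ e = e → μ.map (act ϑ) = μ) ∧
      ∀ (f : C(Sph n, ℝ)) (η : G), Ψ f (act η e) = ∫ u, f (act η u) ∂μ) := by
  have hcont : ∀ η, Continuous (act η) := fun η => hact_cont.comp (Continuous.prodMk_right η)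
  constructor
  · rintro ⟨hmono, hΨ⟩
    obtain ⟨μ, hμfin, hμ⟩ := exists_isFiniteMeasure_eq_integral_of_nonneg
      ((ContinuousMap.evalCLM ℝ e).toLinearMap ∘ₗ Ψ) fun f hf => hmono f hf e
    have hconv := apply_act_eq_integral_of_intertwining hcont hΨ hμ
    exact ⟨μ, hμfin, fun ϑ hϑ => map_act_eq_self_of_convolution hcont hμ hconv hϑ, hconv⟩
  · rintro ⟨μ, -, -, hconv⟩
    exact ⟨apply_nonneg_of_convolution htrans hconv,
      intertwining_of_convolution hact_mul htrans hconv⟩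

/-- A map Ψ : C(S^{n-1}) → C(S^{n-1}) is a monotone, linear map intertwining
rotations if and only if there is a nonnegative zonal finite Borel measure μ on
S^{n-1} with Ψf = f ∗ μ, i.e. (Ψf)(ηe) = ∫ f(ηu) dμ(u).  The rotation group SO(n)
is taken as an abstract topological group G acting transitively on the sphere with
pole e; "zonal" means invariant under the stabilizer of e. -/
theorem stmt2 (n : ℕ) (hn : 3 ≤ n)
    (G : Type*) [Group G] [TopologicalSpace G] [IsTopologicalGroup G]
    [MeasurableSpace G] [BorelSpace G]
    (act : G → Sph n → Sph n)
    (hact_one : ∀ u, act 1 u = u)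
    (hact_mul : ∀ η τ u, act (η * τ) u = act η (act τ u))
    (hact_cont : Continuous fun p : G × Sph n => act p.1 p.2)
    (e : Sph n)
    (htrans : ∀ u : Sph n, ∃ η : G, act η e = u)
    (Ψ : C(Sph n, ℝ) →ₗ[ℝ] C(Sph n, ℝ)) :
    -- Ψ is monotone and intertwines rotations …
    ((∀ f : C(Sph n, ℝ), (∀ u, 0 ≤ f u) → ∀ u, 0 ≤ Ψ f u) ∧
      (∀ (ϑ : G) (f g : C(Sph n, ℝ)), (∀ u, g u = f (act ϑ⁻¹ u)) →
        ∀ u, Ψ g u = Ψ f (act ϑ⁻¹ u)))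
    ↔ -- … iff Ψ is convolution with a nonnegative zonal finite measure μ
    (∃ μ : Measure (Sph n), IsFiniteMeasure μ ∧
      (∀ ϑ : G, act ϑ e = e → μ.map (act ϑ) = μ) ∧
      ∀ (f : C(Sph n, ℝ)) (η : G), Ψ f (act η e) = ∫ u, f (act η u) ∂μ) :=
  stmt2_general n G act hact_mul hact_cont e htrans Ψ
end
end

section
/- For star bodies K, L in R^n (n ≥ 3), the dual mixed volume satisfies the Minkowski-type inequality Ṽ_{-1}(K,L)^n ≥ V(K)^{n+1} V(L)^{-1}, with equality if and only if K and L are dilates. -/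
/-!
Jensen's inequality for the strictly convex function `t ↦ t ^ (n + 1)`, applied to the ratio
`ρ(L,·) / ρ(K,·)` with respect to the weighted measure `ρ(K,u) ^ (n + 1) / ρ(L,u) du`, gives
`(∫ ρ_K ^ n) ^ (n + 1) ≤ (∫ ρ_K ^ (n + 1) / ρ_L) ^ n * ∫ ρ_L ^ n`, with equality exactly when the
ratio is a.e. constant; by continuity of radial functions and positivity of the spherical measure on
open sets, that means `K` and `L` are dilates.
-/

open MeasureTheory Metric
open scoped RealInnerProductSpace

noncomputable section

/-- Spherical Lebesgue measure on S^{n-1}. -/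
def sphMeasure (n : ℕ) [NeZero n] : Measure (Sph n) := volume.toSphere

/-- A star body (with respect to the origin) in ℝⁿ, described by its continuous
positive radial function on the unit sphere. -/
structure StarBody (n : ℕ) where
  radial : C(Sph n, ℝ)
  pos : ∀ u, 0 < radial u

/-- The dual mixed volume Ṽ_r(K,L) = (1/n) ∫_{S^{n-1}} ρ(K,u)^{n-r} ρ(L,u)^r du. -/
def dualMixedVolR (n : ℕ) [NeZero n] (r : ℝ) (K L : StarBody n) : ℝ :=
  (1 / n : ℝ) * ∫ u, K.radial u ^ ((n : ℝ) - r) * L.radial u ^ r ∂(sphMeasure n)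

/-- The volume of a star body, V(K) = (1/n) ∫ ρ(K,u)^n du. -/
def StarBody.vol (n : ℕ) [NeZero n] (K : StarBody n) : ℝ :=
  (1 / n : ℝ) * ∫ u, K.radial u ^ (n : ℕ) ∂(sphMeasure n)

/-- Two star bodies are dilates if their radial functions are proportional. -/
def Dilates (n : ℕ) (K L : StarBody n) : Prop :=
  ∃ c : ℝ, 0 < c ∧ ∀ u, K.radial u = c * L.radial u

section WeightedJensen

variable {α : Type*} [MeasurableSpace α] {μ : Measure α} {w : α → ℝ}

theorem integral_withDensity_ofReal (hw : ∀ᵐ x ∂μ, 0 ≤ w x) (hwm : AEMeasurable w μ)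
    (g : α → ℝ) :
    ∫ x, g x ∂μ.withDensity (fun x => ENNReal.ofReal (w x)) = ∫ x, w x * g x ∂μ := by
  rw [integral_withDensity_eq_integral_toReal_smul₀ hwm.ennreal_ofReal
    (ae_of_all _ fun _ => ENNReal.ofReal_lt_top)]
  refine integral_congr_ae ?_
  filter_upwards [hw] with x hx
  simp [ENNReal.toReal_ofReal hx]

theorem integrable_withDensity_ofReal_iff (hw : ∀ᵐ x ∂μ, 0 ≤ w x) (hwm : AEMeasurable w μ)
    {g : α → ℝ} :
    Integrable g (μ.withDensity (fun x => ENNReal.ofReal (w x))) ↔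
      Integrable (fun x => w x * g x) μ := by
  rw [integrable_withDensity_iff_integrable_smul₀' hwm.ennreal_ofReal
    (ae_of_all _ fun _ => ENNReal.ofReal_lt_top)]
  refine integrable_congr ?_
  filter_upwards [hw] with x hx
  simp [ENNReal.toReal_ofReal hx]

theorem ae_eq_const_or_integral_mul_pow_lt {h : α → ℝ} {m : ℕ} (hm : m ≠ 0)
    (hw : ∀ᵐ x ∂μ, 0 < w x) (hh : ∀ᵐ x ∂μ, 0 ≤ h x) (hwi : Integrable w μ)
    (hwh : Integrable (fun x => w x * h x) μ)
    (hwhm : Integrable (fun x => w x * h x ^ (m + 1)) μ) :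
    (∃ c, ∀ᵐ x ∂μ, h x = c) ∨
      (∫ x, w x * h x ∂μ) ^ (m + 1) < (∫ x, w x ∂μ) ^ m * ∫ x, w x * h x ^ (m + 1) ∂μ := by
  obtain rfl | _ := eq_zero_or_neZero μ
  · exact Or.inl ⟨0, by simp⟩
  have hw₀ : ∀ᵐ x ∂μ, 0 ≤ w x := hw.mono fun _ hx => hx.le
  have hwm := hwi.aemeasurable
  set ν := μ.withDensity (fun x => ENNReal.ofReal (w x))
  have hμν : μ ≪ ν := withDensity_absolutelyContinuous' hwm.ennreal_ofReal
    (hw.mono fun _ hx => (ENNReal.ofReal_pos.2 hx).ne')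
  have : IsFiniteMeasure ν := isFiniteMeasure_withDensity_ofReal hwi.2
  have : NeZero ν := ⟨fun h0 => NeZero.ne μ (Measure.absolutelyContinuous_zero_iff.1 (h0 ▸ hμν))⟩
  have hmass : ν.real Set.univ = ∫ x, w x ∂μ := by
    simpa using integral_withDensity_ofReal hw₀ hwm (fun _ => (1 : ℝ))
  have hWpos : 0 < ∫ x, w x ∂μ := by
    rw [← hmass]
    exact ENNReal.toReal_pos (NeZero.ne _) (measure_ne_top _ _)
  rcases (strictConvexOn_pow (show 2 ≤ m + 1 by omega)).ae_eq_const_or_map_average_lt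
      (continuous_pow _).continuousOn isClosed_Ici (withDensity_absolutelyContinuous _ _ hh)
      ((integrable_withDensity_ofReal_iff hw₀ hwm).2 hwh)
      ((integrable_withDensity_ofReal_iff hw₀ hwm).2 hwhm) with hconst | hlt
  · exact Or.inl ⟨_, hμν.ae_eq hconst⟩
  · right
    rw [average_eq, average_eq, hmass, integral_withDensity_ofReal hw₀ hwm,
      integral_withDensity_ofReal hw₀ hwm, smul_eq_mul, smul_eq_mul] at hlt
    rwa [mul_pow, inv_pow, inv_mul_lt_iff₀ (pow_pos hWpos _), pow_succ (∫ x, w x ∂μ) m,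
      mul_assoc, mul_inv_cancel_left₀ hWpos.ne'] at hlt

variable {f g : α → ℝ} {n : ℕ}

theorem integral_pow_succ_eq_of_ae_eq_const_mul {c : ℝ} (hg : ∀ᵐ x ∂μ, g x ≠ 0)
    (hfg : ∀ᵐ x ∂μ, f x = c * g x) :
    (∫ x, f x ^ n ∂μ) ^ (n + 1) = (∫ x, f x ^ (n + 1) / g x ∂μ) ^ n * ∫ x, g x ^ n ∂μ := by
  have hB : ∫ x, f x ^ n ∂μ = c ^ n * ∫ x, g x ^ n ∂μ := by
    rw [← integral_const_mul]
    refine integral_congr_ae ?_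
    filter_upwards [hfg] with x hx
    rw [hx, mul_pow]
  have hA : ∫ x, f x ^ (n + 1) / g x ∂μ = c ^ (n + 1) * ∫ x, g x ^ n ∂μ := by
    rw [← integral_const_mul]
    refine integral_congr_ae ?_
    filter_upwards [hfg, hg] with x hx hx₀
    rw [hx]
    field_simp
    ring
  rw [hA, hB]
  ring

theorem ae_eq_const_mul_or_integral_pow_succ_lt (hn : n ≠ 0) (hf : ∀ x, 0 < f x)
    (hg : ∀ x, 0 < g x) (hA : Integrable (fun x => f x ^ (n + 1) / g x) μ)
    (hB : Integrable (fun x => f x ^ n) μ) (hC : Integrable (fun x => g x ^ n) μ) :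
    (∃ c, ∀ᵐ x ∂μ, f x = c * g x) ∨
      (∫ x, f x ^ n ∂μ) ^ (n + 1) < (∫ x, f x ^ (n + 1) / g x ∂μ) ^ n * ∫ x, g x ^ n ∂μ := by
  have hB' : ∀ x, f x ^ (n + 1) / g x * (g x / f x) = f x ^ n := fun x => by
    have := (hf x).ne'; have := (hg x).ne'
    field_simp
    ring
  have hC' : ∀ x, f x ^ (n + 1) / g x * (g x / f x) ^ (n + 1) = g x ^ n := fun x => by
    have := (hf x).ne'; have := (hg x).ne'
    rw [div_pow]
    field_simp
    ring
  -- Jensen for `t ↦ t ^ (n + 1)` and the ratio `g / f` under the weight `f ^ (n + 1) / g`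
  rcases ae_eq_const_or_integral_mul_pow_lt hn (w := fun x => f x ^ (n + 1) / g x)
    (h := fun x => g x / f x) (ae_of_all _ fun x => div_pos (pow_pos (hf x) _) (hg x))
    (ae_of_all _ fun x => (div_pos (hg x) (hf x)).le) hA (by simpa only [hB'] using hB)
    (by simpa only [hC'] using hC) with ⟨c, hc⟩ | hlt
  · refine Or.inl ⟨c⁻¹, hc.mono fun x hx => ?_⟩
    rw [← hx, inv_div, div_mul_cancel₀ _ (hg x).ne']
  · simpa only [hB', hC'] using Or.inr hlt

theorem integral_pow_succ_le_and_eq_iff (hn : n ≠ 0) (hf : ∀ x, 0 < f x)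
    (hg : ∀ x, 0 < g x) (hA : Integrable (fun x => f x ^ (n + 1) / g x) μ)
    (hB : Integrable (fun x => f x ^ n) μ) (hC : Integrable (fun x => g x ^ n) μ) :
    (∫ x, f x ^ n ∂μ) ^ (n + 1) ≤ (∫ x, f x ^ (n + 1) / g x ∂μ) ^ n * ∫ x, g x ^ n ∂μ ∧
      ((∫ x, f x ^ n ∂μ) ^ (n + 1) = (∫ x, f x ^ (n + 1) / g x ∂μ) ^ n * ∫ x, g x ^ n ∂μ ↔
        ∃ c, ∀ᵐ x ∂μ, f x = c * g x) := by
  have heq {c : ℝ} := integral_pow_succ_eq_of_ae_eq_const_mul (f := f) (n := n) (c := c)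
    (ae_of_all μ fun x => (hg x).ne')
  rcases ae_eq_const_mul_or_integral_pow_succ_lt hn hf hg hA hB hC with ⟨c, hc⟩ | hlt
  · exact ⟨(heq hc).le, fun _ => ⟨c, hc⟩, fun _ => heq hc⟩
  · exact ⟨hlt.le, fun h => absurd h hlt.ne, fun ⟨_, hc⟩ => heq hc⟩

end WeightedJensen

section Sphere

variable {n : ℕ} [NeZero n]

instance : Nonempty (Sph n) := (NormedSpace.sphere_nonempty.2 zero_le_one).to_subtype

instance : (sphMeasure n).IsOpenPosMeasure := by
  unfold sphMeasure; infer_instance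

instance : IsFiniteMeasure (sphMeasure n) := by
  unfold sphMeasure; infer_instance

theorem integrable_sphMeasure_of_continuous {f : Sph n → ℝ} (hf : Continuous f) :
    Integrable f (sphMeasure n) :=
  hf.integrable_of_hasCompactSupport (HasCompactSupport.of_compactSpace _)

end Sphere

namespace StarBody

variable {n : ℕ} [NeZero n]

theorem integral_radial_pow_pos (K : StarBody n) :
    0 < ∫ u, K.radial u ^ n ∂sphMeasure n := by
  obtain ⟨u⟩ : Nonempty (Sph n) := inferInstance
  have hcont := K.radial.continuous.pow n
  exact integral_pos_of_integrable_nonneg_nonzero (x := u) hcont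
    (integrable_sphMeasure_of_continuous hcont) (fun u => (pow_pos (K.pos u) n).le)
    (pow_pos (K.pos u) n).ne'

theorem exists_ae_eq_const_mul_iff_dilates (K L : StarBody n) :
    (∃ c, ∀ᵐ u ∂sphMeasure n, K.radial u = c * L.radial u) ↔ Dilates n K L := by
  refine ⟨fun ⟨c, hc⟩ => ?_, fun ⟨c, _, hc⟩ => ⟨c, ae_of_all _ hc⟩⟩
  have hKL : ∀ u, K.radial u = c * L.radial u := congrFun <|
    (Continuous.ae_eq_iff_eq _ K.radial.continuous (L.radial.continuous.const_mul c)).1 hc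
  obtain ⟨u⟩ : Nonempty (Sph n) := inferInstance
  exact ⟨c, pos_of_mul_pos_left ((hKL u) ▸ K.pos u) (L.pos u).le, hKL⟩

theorem dualMixedVolR_neg_one (K L : StarBody n) :
    dualMixedVolR n (-1) K L = 1 / n * ∫ u, K.radial u ^ (n + 1) / L.radial u ∂sphMeasure n := by
  have : (n : ℝ) - -1 = (n + 1 : ℕ) := by push_cast; ring
  simp only [dualMixedVolR, this, Real.rpow_natCast, Real.rpow_neg_one, div_eq_mul_inv]

end StarBody

theorem mul_pow_succ_mul_inv {t : ℝ} (ht : t ≠ 0) (a b : ℝ) (n : ℕ) :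
    (t * a) ^ (n + 1) * (t * b)⁻¹ = t ^ n * (a ^ (n + 1) / b) := by
  rw [mul_inv, mul_pow, pow_succ t]
  field_simp

theorem stmt4_general (n : ℕ) [NeZero n] (K L : StarBody n) :
    dualMixedVolR n (-1) K L ^ n ≥ StarBody.vol n K ^ (n + 1) * (StarBody.vol n L)⁻¹ ∧
    (dualMixedVolR n (-1) K L ^ n = StarBody.vol n K ^ (n + 1) * (StarBody.vol n L)⁻¹ ↔
      Dilates n K L) := by
  have hρ {K : StarBody n} : Continuous fun u => K.radial u := K.radial.continuous
  have hn : (0 : ℝ) < 1 / n := by have := NeZero.ne n; positivity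
  have hC := L.integral_radial_pow_pos
  rw [ge_iff_le, StarBody.dualMixedVolR_neg_one, StarBody.vol, StarBody.vol,
    mul_pow_succ_mul_inv hn.ne', mul_pow, mul_le_mul_iff_right₀ (pow_pos hn n),
    mul_right_inj' (pow_ne_zero n hn.ne'), div_le_iff₀ hC, eq_div_iff hC.ne', eq_comm,
    ← StarBody.exists_ae_eq_const_mul_iff_dilates]
  exact integral_pow_succ_le_and_eq_iff (NeZero.ne n) K.pos L.pos
    (integrable_sphMeasure_of_continuous ((hρ.pow _).div hρ fun u => (L.pos u).ne'))
    (integrable_sphMeasure_of_continuous (hρ.pow _))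
    (integrable_sphMeasure_of_continuous (hρ.pow _))

/-- For star bodies K, L in ℝⁿ (n ≥ 3), Ṽ_{-1}(K,L)^n ≥ V(K)^{n+1} V(L)^{-1},
with equality if and only if K and L are dilates. -/
theorem stmt4 (n : ℕ) (hn : 3 ≤ n) [NeZero n] (K L : StarBody n) :
    dualMixedVolR n (-1) K L ^ n ≥ StarBody.vol n K ^ (n + 1) * (StarBody.vol n L)⁻¹ ∧
    (dualMixedVolR n (-1) K L ^ n = StarBody.vol n K ^ (n + 1) * (StarBody.vol n L)⁻¹ ↔
      Dilates n K L) :=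
  stmt4_general n K L
end
end

section
/- Let Φ be a Blaschke Minkowski homomorphism with generating function g, and define the mixed operator by h(Φ(K_1,...,K_{n-1}),·) = S(K_1,...,K_{n-1},·) ∗ g. Then for all convex bodies K_1,...,K_{n-1}, L_1,...,L_{n-1}: V(K_1,...,K_{n-1}, Φ(L_1,...,L_{n-1})) = V(L_1,...,L_{n-1}, Φ(K_1,...,K_{n-1})). -/
open MeasureTheory Metric
open scoped RealInnerProductSpace Pointwise

noncomputable section

/-- Convex bodies in ℝⁿ. -/
abbrev CBody (n : ℕ) := ConvexBody (Euc n)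

/-- The support function h(K,u) = max{u·x : x ∈ K} restricted to the sphere. -/
def supportFn (n : ℕ) (K : CBody n) (u : Sph n) : ℝ :=
  sSup ((fun x => ⟪x, (u : Euc n)⟫) '' (K : Set (Euc n)))

/-- Two convex bodies are homothetic: equal up to translation and positive dilation. -/
def Homothetic (n : ℕ) (K L : CBody n) : Prop :=
  ∃ c : ℝ, 0 < c ∧ ∃ t : Euc n, (L : Set (Euc n)) = t +ᵥ c • (K : Set (Euc n))

/-- The Euclidean unit ball as a convex body. -/
def unitBall (n : ℕ) : CBody n :=
  ⟨closedBall 0 1, convex_closedBall 0 1, isCompact_closedBall 0 1,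
    Metric.nonempty_closedBall.2 zero_le_one⟩

/-- For a Blaschke Minkowski homomorphism Φ with zonal generating function
g(u) = ḡ(⟨u,e⟩) and mixed operator h(Φ(K_1,…,K_{n-1}),·) = S(K_1,…,K_{n-1},·) ∗ g:
V(K_1,…,K_{n-1}, Φ(L_1,…,L_{n-1})) = V(L_1,…,L_{n-1}, Φ(K_1,…,K_{n-1})),
where the mixed volume is given by its integral representation
V(K_1,…,K_{n-1}, Q) = (1/n) ∫ h(Q,u) dS(K_1,…,K_{n-1},u). -/
theorem stmt7 (n : ℕ) (hn : 3 ≤ n) [NeZero n]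
    (gbar : ℝ → ℝ) (hg : Continuous gbar)  -- zonal generating function
    (Sm : (Fin (n - 1) → CBody n) → Measure (Sph n))  -- mixed surface area measures
    (hSfin : ∀ F, IsFiniteMeasure (Sm F))
    (Φm : (Fin (n - 1) → CBody n) → CBody n)
    (hΦ : ∀ (F : Fin (n - 1) → CBody n) (v : Sph n),
      supportFn n (Φm F) v = ∫ u, gbar ⟪(u : Euc n), (v : Euc n)⟫ ∂(Sm F))
    (K L : Fin (n - 1) → CBody n) :
    (1 / n : ℝ) * ∫ u, supportFn n (Φm L) u ∂(Sm K) =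
      (1 / n : ℝ) * ∫ u, supportFn n (Φm K) u ∂(Sm L) := by
  have hKf := hSfin K
  have hLf := hSfin L
  congr 1
  simp only [hΦ]
  have hcont : Continuous (fun p : Sph n × Sph n => gbar ⟪(p.1 : Euc n), (p.2 : Euc n)⟫) := by
    exact hg.comp ((continuous_subtype_val.comp continuous_fst).inner
      (continuous_subtype_val.comp continuous_snd))
  have hint : Integrable (fun p : Sph n × Sph n => gbar ⟪(p.1 : Euc n), (p.2 : Euc n)⟫)
      ((Sm K).prod (Sm L)) := by
    haveI : CompactSpace (Sph n) := by
      have h1 : (0:ℝ) ≤ 1 := zero_le_one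
      exact Metric.sphere.compactSpace _ _
    exact hcont.integrable_of_hasCompactSupport
      (IsCompact.of_isClosed_subset isCompact_univ (isClosed_tsupport _) (Set.subset_univ _))
  calc ∫ u, ∫ v, gbar ⟪(v : Euc n), (u : Euc n)⟫ ∂(Sm L) ∂(Sm K)
      = ∫ u, ∫ v, gbar ⟪(u : Euc n), (v : Euc n)⟫ ∂(Sm L) ∂(Sm K) := by
        simp_rw [real_inner_comm]
    _ = ∫ v, ∫ u, gbar ⟪(u : Euc n), (v : Euc n)⟫ ∂(Sm K) ∂(Sm L) :=
        MeasureTheory.integral_integral_swap hint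
end
end

section
/- Let Φ be a Blaschke Minkowski homomorphism. For all convex bodies K_1, ..., K_{n-1} in R^n, the Steiner point of the mixed body satisfies s(Φ(K_1,...,K_{n-1})) = o (the origin), and consequently the origin lies in the interior of Φ(K_1,...,K_{n-1}). -/
open MeasureTheory Metric
open scoped RealInnerProductSpace Pointwise

noncomputable section

/-- The Steiner point s(K) = n ⨍ h(K,u) u du (mean with respect to the normalized
spherical measure). -/
def steinerPoint (n : ℕ) [NeZero n] (K : CBody n) : Euc n :=
  (n : ℝ) • (((sphMeasure n) Set.univ).toReal)⁻¹ •
    ∫ u, supportFn n K u • (u : Euc n) ∂(sphMeasure n)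

/-!
Write `h` for the support function of `Φ(K₁, …, K_{n-1})` and `S` for the mixed surface area
measure. By Fubini, `∫ h(v) v dv = ∫ (∫ g(⟨u, v⟩) v dv) dS(u)`. The inner integral commutes with
every orthogonal map and is fixed by the reflection in the line `ℝu`, so it equals `c u` for a
constant `c`; since `S` has its centre of mass at the origin, the Steiner point vanishes.

For the interior statement, suppose `0 ∉ int K` and separate: `K ⊆ {⟨x, v⟩ ≤ 0}` for a unit vector
`v`, with strict inequality somewhere on `K`. Let `r` be the reflection in `v^⊥`. Comparing support
functions across the hyperplane gives `(h(r u) - h(u)) ⟨u, v⟩ ≥ 0` for every `u`, with strict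
inequality at `u = v`. But the integral of this continuous function is `⟨v, ∫ h(r u) u - ∫ h(u) u⟩`,
which is `0` because `r` preserves spherical measure and `∫ h(u) u = 0`. Spherical measure charges
every nonempty open set, so this is a contradiction.
-/

section SphereMap

variable {E : Type*} [NormedAddCommGroup E] [NormedSpace ℝ E]

def sphereMap (e : E ≃ₗᵢ[ℝ] E) : sphere (0 : E) 1 ≃ₜ sphere (0 : E) 1 :=
  e.toHomeomorph.subtype fun x => by simp

@[simp]
theorem coe_sphereMap (e : E ≃ₗᵢ[ℝ] E) (u : sphere (0 : E) 1) : (sphereMap e u : E) = e u := rfl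

theorem Ioo_smul_image_sphereMap_preimage (e : E ≃ₗᵢ[ℝ] E) (s : Set (sphere (0 : E) 1)) :
    Set.Ioo (0 : ℝ) 1 • ((↑) '' (sphereMap e ⁻¹' s) : Set E) =
      e ⁻¹' (Set.Ioo (0 : ℝ) 1 • ((↑) '' s)) := by
  ext x
  simp only [Set.mem_smul, Set.mem_image, Set.mem_preimage]
  constructor
  · rintro ⟨r, hr, _, ⟨u, hu, rfl⟩, rfl⟩
    exact ⟨r, hr, e u, ⟨_, hu, rfl⟩, by simp⟩
  · rintro ⟨r, hr, _, ⟨u, hu, rfl⟩, hx⟩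
    refine ⟨r, hr, e.symm u, ⟨sphereMap e.symm u, ?_, rfl⟩, ?_⟩
    · convert hu
      ext
      simp
    · simpa using congr_arg e.symm hx

theorem measurePreserving_sphereMap [MeasurableSpace E] [BorelSpace E] {μ : Measure E}
    {e : E ≃ₗᵢ[ℝ] E} (he : MeasurePreserving e μ μ) :
    MeasurePreserving (sphereMap e) μ.toSphere μ.toSphere := by
  refine ⟨(sphereMap e).measurable, Measure.ext fun s hs => ?_⟩
  rw [Measure.map_apply (sphereMap e).measurable hs,
    Measure.toSphere_apply' _ (hs.preimage (sphereMap e).measurable), Measure.toSphere_apply' _ hs,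
    Ioo_smul_image_sphereMap_preimage]
  exact congr_arg _ (he.measure_preimage_emb e.toHomeomorph.measurableEmbedding _)

end SphereMap

section InnerProductSpace

variable {E : Type*} [NormedAddCommGroup E] [InnerProductSpace ℝ E]

theorem Submodule.reflection_orthogonal_singleton_apply {v : E} (hv : ‖v‖ = 1) (u : E) :
    (ℝ ∙ v)ᗮ.reflection u = u - (2 * ⟪v, u⟫) • v := by
  rw [reflection_orthogonal_apply, reflection_singleton_apply, hv]
  norm_num
  module

theorem inner_reflection_orthogonal_singleton_self (v u : E) :
    ⟪(ℝ ∙ v)ᗮ.reflection u, v⟫ = -⟪u, v⟫ := by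
  calc ⟪(ℝ ∙ v)ᗮ.reflection u, v⟫ = ⟪(ℝ ∙ v)ᗮ.reflection u, -(ℝ ∙ v)ᗮ.reflection v⟫ := by
        rw [Submodule.reflection_orthogonalComplement_singleton_eq_neg, neg_neg]
    _ = -⟪u, v⟫ := by rw [inner_neg_right, LinearIsometryEquiv.inner_map_map]

theorem exists_norm_eq_one_inner_nonpos_of_zero_notMem_interior [CompleteSpace E] {s : Set E}
    (hs : Convex ℝ s) (hs_int : (interior s).Nonempty) (h0 : (0 : E) ∉ interior s) :
    ∃ v : E, ‖v‖ = 1 ∧ (∀ x ∈ s, ⟪x, v⟫ ≤ 0) ∧ ∃ x ∈ s, ⟪x, v⟫ < 0 := by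
  obtain ⟨f, hf⟩ := geometric_hahn_banach_open_point hs.interior isOpen_interior h0
  obtain ⟨x₁, hx₁⟩ := hs_int
  set w := (InnerProductSpace.toDual ℝ E).symm f
  have hw : ∀ x, ⟪x, w⟫ = f x := fun x => by
    rw [real_inner_comm, InnerProductSpace.toDual_symm_apply]
  have hw0 : w ≠ 0 := by
    rintro h
    simpa [← hw, h] using hf x₁ hx₁
  have hs_le : ∀ x ∈ s, f x ≤ 0 := by
    have hcl : s ⊆ closure (interior s) := by
      rw [hs.closure_interior_eq_closure_of_nonempty_interior ⟨x₁, hx₁⟩]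
      exact subset_closure
    intro x hx
    have hclosed : IsClosed {y | f y ≤ 0} := isClosed_le f.continuous continuous_const
    exact closure_minimal (fun y hy => by simpa using (hf y hy).le) hclosed (hcl hx)
  refine ⟨‖w‖⁻¹ • w, norm_smul_inv_norm hw0, fun x hx => ?_, x₁, interior_subset hx₁, ?_⟩
  · rw [real_inner_smul_right, hw]
    exact mul_nonpos_of_nonneg_of_nonpos (by positivity) (hs_le x hx)
  · rw [real_inner_smul_right, hw]
    exact mul_neg_of_pos_of_neg (by positivity) (by simpa using hf x₁ hx₁)

end InnerProductSpace

section SupportFn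

variable {n : ℕ}

theorem le_supportFn (K : CBody n) (u : Sph n) {x : Euc n} (hx : x ∈ K) :
    ⟪x, (u : Euc n)⟫ ≤ supportFn n K u :=
  le_csSup ((K.isCompact.image (by fun_prop)).bddAbove) ⟨x, hx, rfl⟩

theorem supportFn_le (K : CBody n) (u : Sph n) {b : ℝ}
    (hb : ∀ x ∈ K, ⟪x, (u : Euc n)⟫ ≤ b) : supportFn n K u ≤ b :=
  csSup_le (K.nonempty.image _) (Set.forall_mem_image.2 hb)

theorem continuous_supportFn (K : CBody n) : Continuous (supportFn n K) :=
  K.isCompact.continuous_sSup (by fun_prop)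

theorem supportFn_le_supportFn_reflection (K : CBody n) {v : Sph n}
    (hK : ∀ x ∈ K, ⟪x, (v : Euc n)⟫ ≤ 0) {u : Sph n} (hu : 0 ≤ ⟪(u : Euc n), v⟫) :
    supportFn n K u ≤ supportFn n K (sphereMap (ℝ ∙ (v : Euc n))ᗮ.reflection u) := by
  refine supportFn_le K u fun x hx => (le_supportFn K _ hx).trans' ?_
  rw [coe_sphereMap, Submodule.reflection_orthogonal_singleton_apply (by simp), inner_sub_right,
    real_inner_smul_right, real_inner_comm (u : Euc n) v]
  nlinarith [mul_nonneg hu (neg_nonneg.2 (hK x hx))]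

theorem supportFn_reflection_sub_mul_inner_nonneg (K : CBody n) {v : Sph n}
    (hK : ∀ x ∈ K, ⟪x, (v : Euc n)⟫ ≤ 0) (u : Sph n) :
    0 ≤ (supportFn n K (sphereMap (ℝ ∙ (v : Euc n))ᗮ.reflection u) - supportFn n K u) *
      ⟪(u : Euc n), v⟫ := by
  set r := sphereMap (ℝ ∙ (v : Euc n))ᗮ.reflection
  rcases le_total 0 ⟪(u : Euc n), v⟫ with hu | hu
  · exact mul_nonneg (sub_nonneg.2 (supportFn_le_supportFn_reflection K hK hu)) hu
  · have hru : 0 ≤ ⟪(r u : Euc n), v⟫ := by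
      rw [coe_sphereMap, inner_reflection_orthogonal_singleton_self]
      linarith
    have h_le := supportFn_le_supportFn_reflection K hK hru
    rw [show r (r u) = u from Subtype.ext (by simp [r])] at h_le
    exact mul_nonneg_of_nonpos_of_nonpos (by linarith) hu

end SupportFn

section Sphere

variable {n : ℕ} [NeZero n]

instance inst_s10 : IsFiniteMeasure (sphMeasure n) := by
  unfold sphMeasure; infer_instance

instance inst_s10_2 : (sphMeasure n).IsOpenPosMeasure := by
  unfold sphMeasure; infer_instance

theorem integral_comp_sphereMap {G : Type*} [NormedAddCommGroup G] [NormedSpace ℝ G]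
    (e : Euc n ≃ₗᵢ[ℝ] Euc n) (f : Sph n → G) :
    ∫ u, f (sphereMap e u) ∂sphMeasure n = ∫ u, f u ∂sphMeasure n :=
  (measurePreserving_sphereMap e.measurePreserving).integral_comp
    (sphereMap e).measurableEmbedding f

theorem integral_comp_sphereMap_smul_eq_zero (e : Euc n ≃ₗᵢ[ℝ] Euc n) {f : Sph n → ℝ}
    (hf : ∫ u, f u • (u : Euc n) ∂sphMeasure n = 0) :
    ∫ u, f (sphereMap e u) • (u : Euc n) ∂sphMeasure n = 0 := by
  calc ∫ u, f (sphereMap e u) • (u : Euc n) ∂sphMeasure n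
      = ∫ u, e.symm (f (sphereMap e u) • (sphereMap e u : Euc n)) ∂sphMeasure n := by simp
    _ = e.symm (∫ u, f u • (u : Euc n) ∂sphMeasure n) := by
      rw [integral_comp_sphereMap e fun u => e.symm (f u • (u : Euc n))]
      exact e.symm.toLinearIsometry.integral_comp_comm _
    _ = 0 := by rw [hf, map_zero]

theorem integral_sub_comp_sphereMap_smul_eq_zero (e : Euc n ≃ₗᵢ[ℝ] Euc n) {f : Sph n → ℝ}
    (hf_cont : Continuous f) (hf : ∫ u, f u • (u : Euc n) ∂sphMeasure n = 0) :
    ∫ u, (f (sphereMap e u) - f u) • (u : Euc n) ∂sphMeasure n = 0 := by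
  have hint : ∀ g : Sph n → Euc n, Continuous g → Integrable g (sphMeasure n) := fun g hg =>
    hg.integrable_of_hasCompactSupport (.of_compactSpace g)
  simp_rw [sub_smul]
  rw [integral_sub (hint _ (by fun_prop)) (hint _ (by fun_prop)),
    integral_comp_sphereMap_smul_eq_zero e hf, hf, sub_zero]

def zonalMoment (g : ℝ → ℝ) (w : Sph n) : Euc n :=
  ∫ v, g ⟪(w : Euc n), v⟫ • (v : Euc n) ∂sphMeasure n

theorem zonalMoment_sphereMap (g : ℝ → ℝ) (e : Euc n ≃ₗᵢ[ℝ] Euc n) (w : Sph n) :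
    zonalMoment g (sphereMap e w) = e (zonalMoment g w) := by
  calc zonalMoment g (sphereMap e w)
      = ∫ v, e (g ⟪(w : Euc n), v⟫ • (v : Euc n)) ∂sphMeasure n := by
        rw [zonalMoment, ← integral_comp_sphereMap e]
        simp [e.inner_map_map]
    _ = e (zonalMoment g w) := e.toLinearIsometry.integral_comp_comm _

theorem zonalMoment_mem_span (g : ℝ → ℝ) (w : Sph n) :
    zonalMoment g w ∈ ℝ ∙ (w : Euc n) := by
  have hw : sphereMap (ℝ ∙ (w : Euc n)).reflection w = w :=
    Subtype.ext (Submodule.reflection_mem_subspace_eq_self (Submodule.mem_span_singleton_self _))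
  rw [← Submodule.reflection_eq_self_iff, ← zonalMoment_sphereMap, hw]

theorem exists_zonalMoment_eq_smul (g : ℝ → ℝ) :
    ∃ c : ℝ, ∀ w : Sph n, zonalMoment g w = c • (w : Euc n) := by
  rcases isEmpty_or_nonempty (Sph n) with _ | ⟨⟨w₀⟩⟩
  · exact ⟨0, isEmptyElim⟩
  obtain ⟨c, hc⟩ := Submodule.mem_span_singleton.mp (zonalMoment_mem_span g w₀)
  refine ⟨c, fun w => ?_⟩
  -- the reflection in the perpendicular bisector of `w₀` and `w` swaps them
  have hmap : sphereMap (ℝ ∙ ((w₀ : Euc n) - w))ᗮ.reflection w₀ = w :=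
    Subtype.ext (Submodule.reflection_sub (by simp))
  rw [← hmap, zonalMoment_sphereMap, ← hc, map_smul, coe_sphereMap]

theorem integral_zonalConvolution_smul_eq_zero {g : ℝ → ℝ} (hg : Continuous g)
    (P : Measure (Sph n)) [IsFiniteMeasure P] (hP : ∫ u, (u : Euc n) ∂P = 0) :
    ∫ v, (∫ u, g ⟪(u : Euc n), v⟫ ∂P) • (v : Euc n) ∂sphMeasure n = 0 := by
  obtain ⟨c, hc⟩ := exists_zonalMoment_eq_smul (n := n) g
  have hint : Integrable (Function.uncurry fun (v u : Sph n) => g ⟪(u : Euc n), v⟫ • (v : Euc n))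
      ((sphMeasure n).prod P) :=
    (by fun_prop : Continuous _).integrable_of_hasCompactSupport (.of_compactSpace _)
  calc ∫ v, (∫ u, g ⟪(u : Euc n), v⟫ ∂P) • (v : Euc n) ∂sphMeasure n
      = ∫ v, ∫ u, g ⟪(u : Euc n), v⟫ • (v : Euc n) ∂P ∂sphMeasure n := by
        simp_rw [integral_smul_const]
    _ = ∫ u, zonalMoment g u ∂P := integral_integral_swap hint
    _ = 0 := by simp_rw [hc, integral_smul, hP, smul_zero]

theorem zero_mem_interior_of_integral_supportFn_smul_eq_zero (K : CBody n)
    (hK : (interior (K : Set (Euc n))).Nonempty)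
    (hI : ∫ u, supportFn n K u • (u : Euc n) ∂sphMeasure n = 0) :
    (0 : Euc n) ∈ interior (K : Set (Euc n)) := by
  by_contra h0
  obtain ⟨v, hv, hKv, x₁, hx₁, hx₁v⟩ :=
    exists_norm_eq_one_inner_nonpos_of_zero_notMem_interior K.convex hK h0
  lift v to Sph n using (by simpa using hv)
  set r := sphereMap (ℝ ∙ (v : Euc n))ᗮ.reflection
  set h := supportFn n K
  have hcont : Continuous h := continuous_supportFn K
  set φ : Sph n → ℝ := fun u => ⟪(v : Euc n), (h (r u) - h u) • (u : Euc n)⟫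
  have hφ : ∀ u, φ u = (h (r u) - h u) * ⟪(u : Euc n), v⟫ := fun u => by
    simp only [φ, real_inner_smul_right, real_inner_comm]
  have hφ_nonneg : 0 ≤ φ := fun u => by
    rw [hφ]
    exact supportFn_reflection_sub_mul_inner_nonneg K hKv u
  have hφ_v : φ v ≠ 0 := by
    have hrv : r v = ⟨-v, by simp⟩ :=
      Subtype.ext (Submodule.reflection_orthogonalComplement_singleton_eq_neg (v : Euc n))
    have h_rv : 0 < h (r v) := by
      rw [hrv]
      refine lt_of_lt_of_le ?_ (le_supportFn K _ hx₁)
      simpa using hx₁v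
    have h_v : h v ≤ 0 := supportFn_le K v hKv
    rw [hφ, real_inner_self_eq_norm_sq, hv]
    nlinarith
  have hφ_int : ∫ u, φ u ∂sphMeasure n = 0 := by
    rw [integral_inner ((by fun_prop : Continuous _).integrable_of_hasCompactSupport
      (.of_compactSpace _)), integral_sub_comp_sphereMap_smul_eq_zero _ hcont hI, inner_zero_right]
  exact ((by fun_prop : Continuous φ).integral_pos_of_hasCompactSupport_nonneg_nonzero
    (.of_compactSpace φ) hφ_nonneg hφ_v).ne' hφ_int

end Sphere

theorem stmt10_general (n : ℕ) [NeZero n]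
    (gbar : ℝ → ℝ) (hg : Continuous gbar)  -- zonal generating function
    (Sm : (Fin (n - 1) → CBody n) → Measure (Sph n))  -- mixed surface area measures
    (hSfin : ∀ F, IsFiniteMeasure (Sm F))
    (hcenter : ∀ F, ∫ u, ((u : Euc n)) ∂(Sm F) = 0)
    (Φm : (Fin (n - 1) → CBody n) → CBody n)
    (hΦ : ∀ (F : Fin (n - 1) → CBody n) (v : Sph n),
      supportFn n (Φm F) v = ∫ u, gbar ⟪(u : Euc n), (v : Euc n)⟫ ∂(Sm F))
    (hint : ∀ F, (interior (Φm F : Set (Euc n))).Nonempty)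
    (F : Fin (n - 1) → CBody n) :
    steinerPoint n (Φm F) = 0 ∧ (0 : Euc n) ∈ interior (Φm F : Set (Euc n)) := by
  have hI : ∫ u, supportFn n (Φm F) u • (u : Euc n) ∂sphMeasure n = 0 := by
    have := hSfin F
    simp_rw [hΦ F]
    exact integral_zonalConvolution_smul_eq_zero hg (Sm F) (hcenter F)
  exact ⟨by rw [steinerPoint, hI, smul_zero, smul_zero],
    zero_mem_interior_of_integral_supportFn_smul_eq_zero _ (hint F) hI⟩

/-- For a Blaschke Minkowski homomorphism Φ, with mixed operator
h(Φ(K_1,…,K_{n-1}),·) = S(K_1,…,K_{n-1},·) ∗ g (g zonal, g(u) = ḡ(⟨u,e⟩), and the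
mixed surface area measures having center of mass at the origin), the Steiner point
of the mixed body is the origin: s(Φ(K_1,…,K_{n-1})) = o; consequently the origin
is an interior point of Φ(K_1,…,K_{n-1}). -/
theorem stmt10 (n : ℕ) (hn : 3 ≤ n) [NeZero n]
    (gbar : ℝ → ℝ) (hg : Continuous gbar)  -- zonal generating function
    (Sm : (Fin (n - 1) → CBody n) → Measure (Sph n))  -- mixed surface area measures
    (hSfin : ∀ F, IsFiniteMeasure (Sm F))
    (hcenter : ∀ F, ∫ u, ((u : Euc n)) ∂(Sm F) = 0)
    (Φm : (Fin (n - 1) → CBody n) → CBody n)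
    (hΦ : ∀ (F : Fin (n - 1) → CBody n) (v : Sph n),
      supportFn n (Φm F) v = ∫ u, gbar ⟪(u : Euc n), (v : Euc n)⟫ ∂(Sm F))
    (hint : ∀ F, (interior (Φm F : Set (Euc n))).Nonempty)
    (F : Fin (n - 1) → CBody n) :
    steinerPoint n (Φm F) = 0 ∧ (0 : Euc n) ∈ interior (Φm F : Set (Euc n)) :=
  stmt10_general n gbar hg Sm hSfin hcenter Φm hΦ hint F
end
end

section
/- Let Φ be a Blaschke Minkowski homomorphism whose generating function is the support function h(F,·) of a figure of revolution F (centered so its Steiner point is the origin), and define M_Φ : S^n → K^n by h(M_Φ L, ·) = ρ^{n+1}(L,·) ∗ h(F,·). Then for all convex bodies K_1,...,K_{n-1} and every star body L: Ṽ_{-1}(L, Φ*(K_1,...,K_{n-1})) = V(K_1,...,K_{n-1}, M_Φ L). -/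
open MeasureTheory Metric
open scoped RealInnerProductSpace Pointwise

noncomputable section

/-- The polar set A* = {x : x·y ≤ 1 for all y ∈ A}. -/
def polarSet (n : ℕ) (A : Set (Euc n)) : Set (Euc n) :=
  {x | ∀ y ∈ A, ⟪x, y⟫ ≤ 1}

/-- The radial function of a set, ρ(A,u) = sup{r ≥ 0 : r u ∈ A}. -/
def radialFnSet (n : ℕ) (A : Set (Euc n)) (u : Sph n) : ℝ :=
  sSup {r : ℝ | 0 ≤ r ∧ r • (u : Euc n) ∈ A}

lemma supportFn_isGreatest (n : ℕ) (K : CBody n) (u : Sph n) :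
    IsGreatest ((fun x => ⟪x, (u : Euc n)⟫) '' (K : Set (Euc n))) (supportFn n K u) := by
  have hf : Continuous fun x : Euc n => ⟪x, (u : Euc n)⟫ :=
    continuous_id.inner continuous_const
  obtain ⟨y, hy, hmax⟩ := K.isCompact.exists_isMaxOn K.nonempty hf.continuousOn
  rw [isMaxOn_iff] at hmax
  have hgr : IsGreatest ((fun x => ⟪x, (u : Euc n)⟫) '' (K : Set (Euc n))) ⟪y, (u : Euc n)⟫ :=
    ⟨⟨y, hy, rfl⟩, by rintro _ ⟨x, hx, rfl⟩; exact hmax x hx⟩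
  have : supportFn n K u = ⟪y, (u : Euc n)⟫ := hgr.csSup_eq
  rw [this]; exact hgr

lemma supportFn_pos (n : ℕ) (K : CBody n) (h0 : (0 : Euc n) ∈ interior (K : Set (Euc n)))
    (u : Sph n) : 0 < supportFn n K u := by
  obtain ⟨ε, hε, hball⟩ := Metric.mem_nhds_iff.1 (mem_interior_iff_mem_nhds.1 h0)
  have hu : ‖(u : Euc n)‖ = 1 := by
    have := u.2; simpa [mem_sphere_zero_iff_norm] using this
  have hmem : (ε / 2) • (u : Euc n) ∈ (K : Set (Euc n)) := by
    apply hball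
    simp only [Metric.mem_ball, dist_zero_right, norm_smul, hu, mul_one, Real.norm_eq_abs]
    rw [abs_of_pos (by linarith)]; linarith
  have hle : ⟪(ε / 2) • (u : Euc n), (u : Euc n)⟫ ≤ supportFn n K u :=
    (supportFn_isGreatest n K u).2 ⟨_, hmem, rfl⟩
  have : ⟪(ε / 2) • (u : Euc n), (u : Euc n)⟫ = ε / 2 := by
    rw [real_inner_smul_left, real_inner_self_eq_norm_sq, hu]; ring
  linarith [this ▸ hle]

lemma radialFnSet_polar (n : ℕ) (K : CBody n)
    (h0 : (0 : Euc n) ∈ interior (K : Set (Euc n))) (u : Sph n) :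
    radialFnSet n (polarSet n (K : Set (Euc n))) u = (supportFn n K u)⁻¹ := by
  set h := supportFn n K u with hh
  have hpos : 0 < h := supportFn_pos n K h0 u
  have hset : {r : ℝ | 0 ≤ r ∧ r • (u : Euc n) ∈ polarSet n (K : Set (Euc n))}
      = Set.Icc 0 h⁻¹ := by
    ext r
    simp only [Set.mem_setOf_eq, Set.mem_Icc, polarSet]
    constructor
    · rintro ⟨hr0, hr⟩
      refine ⟨hr0, ?_⟩
      obtain ⟨⟨y, hy, hyeq⟩, -⟩ := supportFn_isGreatest n K u
      have hyeq' : ⟪y, (u : Euc n)⟫ = h := hyeq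
      have := hr y hy
      rw [real_inner_smul_left, real_inner_comm, hyeq'] at this
      rw [← one_div, le_div_iff₀ hpos]
      linarith
    · rintro ⟨hr0, hr⟩
      refine ⟨hr0, fun y hy => ?_⟩
      have h1 : ⟪y, (u : Euc n)⟫ ≤ h := (supportFn_isGreatest n K u).2 ⟨y, hy, rfl⟩
      rw [real_inner_smul_left, real_inner_comm]
      calc r * ⟪y, (u : Euc n)⟫ ≤ r * h := mul_le_mul_of_nonneg_left h1 hr0
        _ ≤ h⁻¹ * h := mul_le_mul_of_nonneg_right hr hpos.le
        _ = 1 := inv_mul_cancel₀ hpos.ne'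
  rw [radialFnSet, hset, csSup_Icc (by positivity)]

/-- Let Φ be a Blaschke Minkowski homomorphism whose generating function is the
support function of a figure of revolution F₀ (so h(F₀,v) = ḡ(⟨v,e⟩), Steiner
point at the origin), and M_Φ the associated operator with
h(M_Φ L,·) = ρ^{n+1}(L,·) ∗ h(F₀,·).  Then for convex bodies K_1,…,K_{n-1} and a
star body L:  Ṽ_{-1}(L, Φ*(K_1,…,K_{n-1})) = V(K_1,…,K_{n-1}, M_Φ L), where
Ṽ_{-1}(L,M) = (1/n)∫ ρ(L,u)^{n+1} ρ(M,u)^{-1} du and the mixed volume is given by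
its integral representation against the mixed surface area measure. -/
theorem stmt16 (n : ℕ) (hn : 3 ≤ n) [NeZero n] (e : Sph n)
    (gbar : ℝ → ℝ) (hg : Continuous gbar)
    (F₀ : CBody n)  -- the generating figure of revolution
    (hF₀ : ∀ v : Sph n, supportFn n F₀ v = gbar ⟪(v : Euc n), (e : Euc n)⟫)
    (hF₀s : steinerPoint n F₀ = 0)  -- F₀ is centered: Steiner point at the origin
    (Sm : (Fin (n - 1) → CBody n) → Measure (Sph n))  -- mixed surface area measures
    (hSfin : ∀ F, IsFiniteMeasure (Sm F))
    (Φm : (Fin (n - 1) → CBody n) → CBody n)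
    (hΦ : ∀ (F : Fin (n - 1) → CBody n) (v : Sph n),
      supportFn n (Φm F) v = ∫ u, gbar ⟪(u : Euc n), (v : Euc n)⟫ ∂(Sm F))
    (hint : ∀ F, (0 : Euc n) ∈ interior (Φm F : Set (Euc n)))
    (L : StarBody n) (Kk : Fin (n - 1) → CBody n) :
    (1 / n : ℝ) * ∫ u, L.radial u ^ (n + 1) *
        (radialFnSet n (polarSet n (Φm Kk : Set (Euc n))) u)⁻¹ ∂(sphMeasure n) =
      (1 / n : ℝ) * ∫ v, (∫ u, L.radial u ^ (n + 1) *
        gbar ⟪(u : Euc n), (v : Euc n)⟫ ∂(sphMeasure n)) ∂(Sm Kk) :=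
  by
  have hfin := hSfin Kk
  have hsph : IsFiniteMeasure (sphMeasure n) := by unfold sphMeasure; infer_instance
  congr 1
  have hrad : ∀ u : Sph n,
      (radialFnSet n (polarSet n (Φm Kk : Set (Euc n))) u)⁻¹ = supportFn n (Φm Kk) u := by
    intro u; rw [radialFnSet_polar n (Φm Kk) (hint Kk) u, inv_inv]
  calc ∫ u, L.radial u ^ (n + 1) *
        (radialFnSet n (polarSet n (Φm Kk : Set (Euc n))) u)⁻¹ ∂(sphMeasure n)
      = ∫ u, (∫ v, L.radial u ^ (n + 1) * gbar ⟪(u : Euc n), (v : Euc n)⟫ ∂(Sm Kk))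
          ∂(sphMeasure n) := by
        refine integral_congr_ae (Filter.Eventually.of_forall fun u => ?_)
        dsimp only
        rw [hrad u, hΦ Kk u, MeasureTheory.integral_const_mul]
        congr 1
        refine integral_congr_ae (Filter.Eventually.of_forall fun v => ?_)
        dsimp only
        rw [real_inner_comm]
    _ = ∫ v, (∫ u, L.radial u ^ (n + 1) *
          gbar ⟪(u : Euc n), (v : Euc n)⟫ ∂(sphMeasure n)) ∂(Sm Kk) := by
        apply MeasureTheory.integral_integral_swap
        apply Continuous.integrable_of_hasCompactSupport
        · exact ((L.radial.continuous.comp continuous_fst).pow _).mul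
            (hg.comp (continuous_inner.comp
              ((continuous_subtype_val.comp continuous_fst).prodMk
               (continuous_subtype_val.comp continuous_snd))))
        · exact HasCompactSupport.of_compactSpace _
end
end
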